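/- Let K be a field, V a vector space over K, and p a positive integer. Let v₁, …, v_{p+1} ∈ V be linearly independent with U = span{v₁, …, v_{p+1}}, and let u₁, u₂, u₃ ∈ V be pairwise non-proportional vectors (u_ℓ ∉ span{u_k} for k ≠ ℓ) with u_k ∉ U for k = 1, 2, 3. Suppose W is a K-subspace of V with finrank W = 2 such that u₁ ∈ W, u₂ ∈ W, and u₃ ∉ W. Then there is no K-subspace W′ of V with finrank W′ = 2 that contains at least four of the p+4 vectors v₁, …, v_{p+1}, u₁, u₂, u₃ (i.e. the vectors at four distinct positions of this list). -/

import Mathlib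

/-!
Among four points of the list lying on one line `W'`, either three are `vᵢ`'s, impossible since
they are independent and `dim W' = 2`; or all three `uₖ` lie on `W'`, and then `W' = W` because both
are the line through `u₁, u₂`, contradicting `u₃ ∉ W`; or exactly two are `vᵢ`'s, which then span
`W'`, so `W' ⊆ U`, contradicting `uₖ ∉ U` for the `uₖ` on `W'`.
-/

open Finset Submodule Module

section

variable {K V ι : Type*} [Field K] [AddCommGroup V] [Module K V]

theorem linearIndependent_pair_of_notMem_span_singleton {x y : V} (hx : x ∉ K ∙ y)
    (hy : y ∉ K ∙ x) : LinearIndependent K ![x, y] :=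
  (LinearIndependent.pair_iff' fun h => by simp [h] at hx).2 fun a h =>
    hy (mem_span_singleton.2 ⟨a, h⟩)

theorem LinearIndependent.span_eq_of_card_eq_finrank [Fintype ι] {v : ι → V}
    (hv : LinearIndependent K v) {W : Submodule K V} [FiniteDimensional K W]
    (hmem : ∀ i, v i ∈ W) (hcard : Fintype.card ι = finrank K W) :
    span K (Set.range v) = W :=
  eq_of_le_of_finrank_eq (span_le.2 (Set.range_subset_iff.2 hmem))
    (by rw [finrank_span_eq_card hv, hcard])

theorem eq_of_finrank_eq_two_of_mem {x y : V} (hxy : LinearIndependent K ![x, y])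
    {W₁ W₂ : Submodule K V} (h₁ : finrank K W₁ = 2) (h₂ : finrank K W₂ = 2)
    (hx₁ : x ∈ W₁) (hy₁ : y ∈ W₁) (hx₂ : x ∈ W₂) (hy₂ : y ∈ W₂) : W₁ = W₂ := by
  have : FiniteDimensional K W₁ := finite_of_finrank_eq_succ h₁
  have : FiniteDimensional K W₂ := finite_of_finrank_eq_succ h₂
  rw [← hxy.span_eq_of_card_eq_finrank (Fin.forall_fin_two.2 ⟨hx₁, hy₁⟩) (by simp [h₁]),
    ← hxy.span_eq_of_card_eq_finrank (Fin.forall_fin_two.2 ⟨hx₂, hy₂⟩) (by simp [h₂])]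

theorem LinearIndependent.finrank_span_image_finset {v : ι → V} (hv : LinearIndependent K v)
    (s : Finset ι) : finrank K (span K (v '' s)) = #s := by
  have := finrank_span_eq_card (hv.comp (Subtype.val : s → ι) Subtype.val_injective)
  rwa [Fintype.card_coe, Set.range_comp, Subtype.range_coe_subtype] at this

theorem LinearIndependent.card_le_finrank_of_forall_mem {v : ι → V}
    (hv : LinearIndependent K v) {W : Submodule K V} [FiniteDimensional K W] {s : Finset ι}
    (hs : ∀ i ∈ s, v i ∈ W) : #s ≤ finrank K W :=
  hv.finrank_span_image_finset s ▸ finrank_mono (span_le.2 (Set.image_subset_iff.2 hs))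

theorem LinearIndependent.le_span_of_card_eq_finrank {v : ι → V}
    (hv : LinearIndependent K v) {W : Submodule K V} [FiniteDimensional K W] {s : Finset ι}
    (hs : ∀ i ∈ s, v i ∈ W) (hcard : #s = finrank K W) : W ≤ span K (Set.range v) := by
  have hspan : span K (v '' s) = W := eq_of_le_of_finrank_eq
    (span_le.2 (Set.image_subset_iff.2 hs)) (by rw [hv.finrank_span_image_finset, hcard])
  exact hspan ▸ span_mono (Set.image_subset_range v s)

end

theorem Fin.card_filter_append {α : Type*} {m n : ℕ} (a : Fin m → α) (b : Fin n → α)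
    (P : α → Prop) [DecidablePred P] :
    #{t | P (Fin.append a b t)} = #{i | P (a i)} + #{j | P (b j)} := by
  simp only [card_filter, Fin.sum_univ_add, Fin.append_left, Fin.append_right]

theorem stmt_13_general (K : Type*) (V : Type*) [Field K] [AddCommGroup V] [Module K V]
    (p : ℕ) (v : Fin (p + 1) → V) (hv : LinearIndependent K v)
    (U : Submodule K V) (hU : U = Submodule.span K (Set.range v))
    (u : Fin 3 → V)
    (hu : ∀ k l : Fin 3, k ≠ l → u l ∉ Submodule.span K {u k})
    (huU : ∀ k, u k ∉ U)
    (W : Submodule K V) (hW : Module.finrank K W = 2)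
    (hu₁ : u 0 ∈ W) (hu₂ : u 1 ∈ W) (hu₃ : u 2 ∉ W)
    (f : Fin (p + 4) → V) (hf : f = Fin.append v u) :
    ¬ ∃ W' : Submodule K V, Module.finrank K W' = 2 ∧
      ∃ i j k l : Fin (p + 4), i ≠ j ∧ i ≠ k ∧ i ≠ l ∧ j ≠ k ∧ j ≠ l ∧ k ≠ l ∧
        f i ∈ W' ∧ f j ∈ W' ∧ f k ∈ W' ∧ f l ∈ W' := by
  classical
  rintro ⟨W', hW', i, j, k, l, hij, hik, hil, hjk, hjl, hkl, hi, hj, hk, hl⟩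
  have : FiniteDimensional K W' := finite_of_finrank_eq_succ hW'
  have hfour : 4 ≤ #{a | v a ∈ W'} + #{b | u b ∈ W'} := by
    rw [← Fin.card_filter_append v u (· ∈ W'), ← hf]
    calc 4 = #{i, j, k, l} :=
          (card_eq_four.2 ⟨i, j, k, l, hij, hik, hil, hjk, hjl, hkl, rfl⟩).symm
      _ ≤ #{t | f t ∈ W'} := card_le_card (by simp [insert_subset_iff, hi, hj, hk, hl])
  have hv_card : #{a | v a ∈ W'} ≤ 2 :=
    hW' ▸ hv.card_le_finrank_of_forall_mem (s := {a | v a ∈ W'}) (by simp)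
  have hu_card : #{b | u b ∈ W'} < 3 := by
    refine (card_filter_le _ _).lt_of_ne fun h => hu₃ ?_
    have hmem : ∀ b, u b ∈ W' := by simpa using card_filter_eq_iff.1 h
    have hWW' : W = W' := eq_of_finrank_eq_two_of_mem
      (linearIndependent_pair_of_notMem_span_singleton (hu 1 0 (by decide)) (hu 0 1 (by decide)))
      hW hW' hu₁ hu₂ (hmem 0) (hmem 1)
    exact hWW' ▸ hmem 2
  obtain ⟨b, hb⟩ : ∃ b, u b ∈ W' := by
    simpa [Finset.Nonempty] using card_pos.1 (show 0 < #{b | u b ∈ W'} by omega)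
  have hW'U : W' ≤ U := hU ▸ hv.le_span_of_card_eq_finrank (s := {a | v a ∈ W'}) (by simp)
    (by omega)
  exact huU b (hW'U hb)

/-- Concluding incidence argument of Case 1 in the proof of Theorem 1.1: with
`v₁, …, v_{p+1}` linearly independent spanning `U`, `u₁, u₂, u₃` pairwise
non-proportional vectors outside `U`, and `W` a 2-dimensional subspace with
`u₁, u₂ ∈ W` and `u₃ ∉ W`, no 2-dimensional subspace `W'` can contain the vectors
at four distinct positions of the list `v₁, …, v_{p+1}, u₁, u₂, u₃`. -/
theorem stmt_13 (K : Type*) (V : Type*) [Field K] [AddCommGroup V] [Module K V]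
    (p : ℕ) (hp : 0 < p) (v : Fin (p + 1) → V) (hv : LinearIndependent K v)
    (U : Submodule K V) (hU : U = Submodule.span K (Set.range v))
    (u : Fin 3 → V)
    (hu : ∀ k l : Fin 3, k ≠ l → u l ∉ Submodule.span K {u k})
    (huU : ∀ k, u k ∉ U)
    (W : Submodule K V) (hW : Module.finrank K W = 2)
    (hu₁ : u 0 ∈ W) (hu₂ : u 1 ∈ W) (hu₃ : u 2 ∉ W)
    (f : Fin (p + 4) → V) (hf : f = Fin.append v u) :
    ¬ ∃ W' : Submodule K V, Module.finrank K W' = 2 ∧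
      ∃ i j k l : Fin (p + 4), i ≠ j ∧ i ≠ k ∧ i ≠ l ∧ j ≠ k ∧ j ≠ l ∧ k ≠ l ∧
        f i ∈ W' ∧ f j ∈ W' ∧ f k ∈ W' ∧ f l ∈ W' :=
  stmt_13_general K V p v hv U hU u hu huU W hW hu₁ hu₂ hu₃ f hf
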